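/- For all n, the number of permutations of [n] avoiding both generalized patterns 1-32 and 21-3 equals the number of strongly monotone partitions of [n]. -/

import Mathlib

/-!
Cut a permutation into its maximal ascending runs. At a descent `b > c` between two consecutive
runs, avoiding 1-32 forces `c` below every earlier entry, and avoiding 21-3 forces `b` above every
later entry. So the runs of an avoiding permutation, read from left to right, have strictly
decreasing minima and strictly decreasing maxima: their value sets form a strongly monotone
partition. Conversely, writing the blocks of a strongly monotone partition in increasing order,
blocks taken by decreasing minimum, gives a permutation avoiding both patterns whose runs are
exactly these blocks; and a permutation is recovered from its runs in the same way.
-/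

def contains132 {n : ℕ} (π : Equiv.Perm (Fin n)) : Prop :=
  ∃ i j : ℕ, ∃ (_ : i < j) (hj : j + 1 < n),
    π ⟨i, by omega⟩ < π ⟨j + 1, hj⟩ ∧ π ⟨j + 1, hj⟩ < π ⟨j, by omega⟩

def contains21_3 {n : ℕ} (π : Equiv.Perm (Fin n)) : Prop :=
  ∃ i j : ℕ, ∃ (_ : i + 1 < j) (hj : j < n),
    π ⟨i + 1, by omega⟩ < π ⟨i, by omega⟩ ∧ π ⟨i, by omega⟩ < π ⟨j, hj⟩

def StronglyMonotonePartition {n : ℕ} (P : Finpartition (Finset.univ : Finset (Fin n))) : Prop :=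
  ∀ A ∈ P.parts, ∀ B ∈ P.parts, A.min < B.min → A.max < B.max

namespace Finset

variable {α : Type*} [LinearOrder α] {s : Finset α} {a : α}

theorem coe_lt_min_iff : (a : WithTop α) < s.min ↔ ∀ b ∈ s, a < b := by
  simp [min_eq_inf_withTop, Finset.lt_inf_iff (WithTop.coe_lt_top a)]

theorem min_lt_coe_iff : s.min < a ↔ ∃ b ∈ s, b < a := by
  simp [min_eq_inf_withTop, Finset.inf_lt_iff]

theorem max_lt_coe_iff : s.max < a ↔ ∀ b ∈ s, b < a := by
  simp [max_eq_sup_withBot, Finset.sup_lt_iff (WithBot.bot_lt_coe a)]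

theorem coe_lt_max_iff : (a : WithBot α) < s.max ↔ ∃ b ∈ s, a < b := by
  simp [max_eq_sup_withBot, Finset.lt_sup_iff]

theorem head_sort_le_getLast_sort {A B : Finset α} (h : B.max < A.max) (hA : A.sort ≠ [])
    (hB : B.sort ≠ []) : B.sort.head hB ≤ A.sort.getLast hA := by
  obtain ⟨m, hm⟩ := max_of_nonempty ⟨_, (mem_sort _).1 (List.getLast_mem hA)⟩
  have hlt : B.sort.head hB < m :=
    max_lt_coe_iff.1 (hm ▸ h) _ ((mem_sort _).1 (List.head_mem hB))
  exact hlt.le.trans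
    ((pairwise_sort A _).rel_getLast ((mem_sort _).2 (mem_of_max hm)))

end Finset

namespace List

variable {α : Type*} [LinearOrder α]

def Contains1_32 (l : List α) : Prop :=
  ∃ u b c w, l = u ++ b :: c :: w ∧ ∃ a ∈ u, a < c ∧ c < b

def Contains21_3 (l : List α) : Prop :=
  ∃ u b a w, l = u ++ b :: a :: w ∧ a < b ∧ ∃ c ∈ w, b < c

theorem eq_take_append_getElem_cons_getElem_cons_drop {β : Type*} {l : List β} {j : ℕ}
    (hj : j + 1 < l.length) : l = l.take j ++ l[j] :: l[j + 1] :: l.drop (j + 2) := by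
  rw [← drop_eq_getElem_cons, ← drop_eq_getElem_cons, take_append_drop]

theorem contains1_32_iff_getElem {l : List α} :
    l.Contains1_32 ↔ ∃ i j, ∃ (_ : i < j) (hj : j + 1 < l.length),
      l[i] < l[j + 1] ∧ l[j + 1] < l[j] := by
  constructor
  · rintro ⟨u, b, c, w, rfl, a, ha, hac, hcb⟩
    obtain ⟨i, hi, rfl⟩ := getElem_of_mem ha
    refine ⟨i, u.length, hi, by simp, ?_⟩
    simp [getElem_append_left hi, hac, hcb]
  · rintro ⟨i, j, hij, hj, hlt⟩
    exact ⟨_, _, _, _, eq_take_append_getElem_cons_getElem_cons_drop hj, l[i],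
      mem_take_iff_getElem.2 ⟨i, by omega, rfl⟩, hlt⟩

theorem contains21_3_iff_getElem {l : List α} :
    l.Contains21_3 ↔ ∃ i j, ∃ (_ : i + 1 < j) (hj : j < l.length),
      l[i + 1] < l[i] ∧ l[i] < l[j] := by
  constructor
  · rintro ⟨u, b, a, w, rfl, hab, c, hc, hbc⟩
    obtain ⟨k, hk, rfl⟩ := getElem_of_mem hc
    have hpos : (u ++ b :: a :: w)[u.length + 2 + k]'(by simp; omega) = w[k] := by
      rw [getElem_append_right (by omega)]
      simp [show u.length + 2 + k - u.length = k + 2 by omega]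
    exact ⟨u.length, u.length + 2 + k, by omega, by simp; omega, by simp [hab], by simpa [hpos]⟩
  · rintro ⟨i, j, hij, hj, hlt, hlt'⟩
    have hi : i + 1 < l.length := by omega
    refine ⟨_, _, _, _, eq_take_append_getElem_cons_getElem_cons_drop hi, hlt, l[j], ?_, hlt'⟩
    exact mem_drop_iff_getElem.2 ⟨j - (i + 2), by omega, by congr 1; omega⟩

theorem Contains1_32.append_left {m : List α} (h : m.Contains1_32) (r : List α) :
    (r ++ m).Contains1_32 := by
  obtain ⟨u, b, c, w, rfl, a, ha, habc⟩ := h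
  exact ⟨r ++ u, b, c, w, by simp, a, mem_append_right r ha, habc⟩

theorem Contains21_3.append_left {m : List α} (h : m.Contains21_3) (r : List α) :
    (r ++ m).Contains21_3 := by
  obtain ⟨u, b, a, w, rfl, habc⟩ := h
  exact ⟨r ++ u, b, a, w, by simp, habc⟩

theorem descent_separates_of_not_contains {u w : List α} {b c : α}
    (hl : (u ++ b :: c :: w).Nodup) (h132 : ¬ (u ++ b :: c :: w).Contains1_32)
    (h213 : ¬ (u ++ b :: c :: w).Contains21_3) (hcb : c < b) :
    (∀ a ∈ u ++ [b], c < a) ∧ ∀ x ∈ c :: w, x < b := by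
  obtain ⟨-, hbcw, hdisj⟩ := nodup_append.1 hl
  constructor
  · intro a ha
    rcases mem_append.1 ha with ha | ha
    · refine lt_of_le_of_ne (not_lt.1 fun hac => h132 ⟨u, b, c, w, rfl, a, ha, hac, hcb⟩) ?_
      rintro rfl
      exact hdisj _ ha _ (by simp) rfl
    · exact mem_singleton.1 ha ▸ hcb
  · intro x hx
    rcases mem_cons.1 hx with rfl | hx
    · exact hcb
    · refine lt_of_le_of_ne (not_lt.1 fun hbx => h213 ⟨u, b, c, w, rfl, hcb, x, hx, hbx⟩) ?_
      rintro rfl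
      exact (nodup_cons.1 hbcw).1 (mem_cons_of_mem c hx)

theorem not_contains21_3_append {r m : List α} (hr : r.SortedLT)
    (hm : ∀ c ∈ m, ∃ y ∈ r, c < y) (h : ¬ m.Contains21_3) : ¬ (r ++ m).Contains21_3 := by
  have hadj := isChain_iff_forall_rel_of_append_cons_cons.1 (sortedLT_iff_isChain.1 hr)
  rintro ⟨u, b, a, w, he, hab, c, hc, hbc⟩
  -- the descent `b a` lies in `m`, straddles the junction, or lies in the increasing `r`
  rcases append_eq_append_iff.1 he with ⟨v, rfl, hv⟩ | ⟨v, rfl, hv⟩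
  · exact h ⟨v, b, a, w, hv, hab, c, hc, hbc⟩
  · rcases v with _ | ⟨x, _ | ⟨x', v⟩⟩
    · exact h ⟨[], b, a, w, by simpa using hv.symm, hab, c, hc, hbc⟩
    · obtain ⟨rfl, rfl⟩ : b = x ∧ a :: w = m := by simpa using hv
      obtain ⟨y, hy, hcy⟩ := hm c (mem_cons_of_mem a hc)
      have hyb : y ≤ b := by simpa using (hr.pairwise.imp le_of_lt).rel_getLast hy
      exact lt_asymm hbc (hcy.trans_le hyb)
    · obtain ⟨rfl, rfl, -⟩ : b = x ∧ a = x' ∧ w = v ++ m := by simpa using hv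
      exact lt_asymm hab (hadj rfl)

theorem not_contains1_32_append {r m : List α} (hr : r.SortedLT)
    (hm : ∀ a ∈ m, ∃ y ∈ r, y < a) (h : ¬ m.Contains1_32) : ¬ (m ++ r).Contains1_32 := by
  have hadj := isChain_iff_forall_rel_of_append_cons_cons.1 (sortedLT_iff_isChain.1 hr)
  rintro ⟨u, b, c, w, he, a, ha, hac, hcb⟩
  -- the descent `b c` lies in the increasing `r`, straddles the junction, or lies in `m`
  rcases append_eq_append_iff.1 he with ⟨v, rfl, hv⟩ | ⟨v, rfl, hv⟩
  · exact lt_asymm hcb (hadj hv)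
  · rcases v with _ | ⟨x, _ | ⟨x', v⟩⟩
    · exact lt_asymm hcb (hadj (l₁ := []) (by simpa using hv.symm))
    · obtain ⟨rfl, rfl⟩ : b = x ∧ c :: w = r := by simpa using hv
      obtain ⟨y, hy, hya⟩ := hm a (mem_append_left _ ha)
      have hcy : c ≤ y := (hr.pairwise.imp le_of_lt).rel_head hy
      exact lt_asymm hac (hcy.trans_lt hya)
    · obtain ⟨rfl, rfl, rfl⟩ : b = x ∧ c = x' ∧ w = v ++ r := by simpa using hv
      exact h ⟨u, b, c, v, rfl, a, ha, hac, hcb⟩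

end List

section StronglyDecreasing

variable {α : Type*} [LinearOrder α]

def StronglyDecreasing (bs : List (Finset α)) : Prop :=
  bs.Pairwise fun A B => B.min < A.min ∧ B.max < A.max

theorem StronglyDecreasing.nodup {bs : List (Finset α)} (h : StronglyDecreasing bs) : bs.Nodup :=
  h.imp fun hAB hAB' => (hAB' ▸ hAB.1).false

theorem StronglyDecreasing.eq_of_toFinset_eq {bs bs' : List (Finset α)}
    (h : StronglyDecreasing bs) (h' : StronglyDecreasing bs') (he : bs.toFinset = bs'.toFinset) :
    bs = bs' :=
  (List.perm_of_nodup_nodup_toFinset_eq h.nodup h'.nodup he).eq_of_pairwise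
    (fun _ _ _ _ hAB hBA => (lt_asymm hAB.1 hBA.1).elim) h h'

theorem StronglyDecreasing.max_lt_max_of_min_lt {bs : List (Finset α)} (h : StronglyDecreasing bs)
    {A B : Finset α} (hA : A ∈ bs) (hB : B ∈ bs) (hmin : A.min < B.min) : A.max < B.max :=
  List.Pairwise.forall_of_forall_of_flip (R := fun A B => A.min < B.min → A.max < B.max)
    (fun _ _ hAA => (lt_irrefl _ hAA).elim) (h.imp fun hAB hBA => (lt_asymm hAB.1 hBA).elim)
    (h.imp fun hAB _ => hAB.2) hA hB hmin

end StronglyDecreasing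

namespace List

variable {α : Type*} [LinearOrder α]

def ascRuns (l : List α) : List (List α) :=
  l.splitBy fun a b => a < b

def runBlocks (l : List α) : List (Finset α) :=
  l.ascRuns.map toFinset

theorem sortedLT_of_mem_ascRuns {l r : List α} (hr : r ∈ l.ascRuns) : r.SortedLT := by
  simpa [sortedLT_iff_isChain] using isChain_of_mem_splitBy hr

theorem flatMap_sort_runBlocks (l : List α) : l.runBlocks.flatMap Finset.sort = l := by
  conv_rhs => rw [← flatten_splitBy (fun a b => a < b) l, ← map_id (l.splitBy _)]
  rw [runBlocks, flatMap_map, flatMap_def]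
  congr 1
  refine map_congr_left fun r hr => ?_
  have hr := (sortedLT_of_mem_ascRuns hr).pairwise
  exact (toFinset_sort _ hr.nodup).2 (hr.imp le_of_lt)

theorem stronglyDecreasing_runBlocks {l : List α} (hl : l.Nodup) (h132 : ¬ l.Contains1_32)
    (h213 : ¬ l.Contains21_3) : StronglyDecreasing l.runBlocks := by
  rw [runBlocks]
  generalize hrs : l.ascRuns = rs
  induction rs generalizing l with
  | nil => exact Pairwise.nil
  | cons r rs ih =>
    obtain ⟨rfl, hnil, -, hchain⟩ := splitBy_eq_iff.1 hrs
    rw [flatten_cons] at hl h132 h213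
    have htail := ih hl.of_append_right (fun h => h132 (h.append_left r))
      (fun h => h213 (h.append_left r)) (splitBy_eq_iff.2 ⟨rfl,
        fun h => hnil (mem_cons_of_mem r h),
        fun s hs => isChain_of_mem_splitBy (hrs ▸ mem_cons_of_mem r hs), hchain.tail⟩)
    refine pairwise_cons.2 ⟨?_, htail⟩
    rcases rs with _ | ⟨s, rs⟩
    · simp
    obtain ⟨r, b, rfl⟩ := (eq_nil_or_concat' r).resolve_left fun h => hnil (h ▸ mem_cons_self)
    obtain ⟨c, s, rfl⟩ := exists_cons_of_ne_nil (l := s) fun h => hnil (h ▸ by simp)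
    rw [show r ++ [b] ++ ((c :: s) :: rs).flatten = r ++ b :: c :: (s ++ rs.flatten) by simp]
      at hl h132 h213
    -- maximality of the run `r ++ [b]` and distinctness make `b c` a descent
    have hcb : c < b := by
      refine lt_of_le_of_ne ?_ fun hcb => ?_
      · simpa using (isChain_cons_cons.1 hchain).1
      · simp [nodup_append, hcb] at hl
    obtain ⟨hlow, hhigh⟩ := descent_separates_of_not_contains hl h132 h213 hcb
    intro B hB
    obtain ⟨t, ht, rfl⟩ := mem_map.1 hB
    constructor
    · calc t.toFinset.min ≤ (c :: s).toFinset.min := by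
            rcases mem_cons.1 ht with rfl | ht
            · exact le_rfl
            · exact ((pairwise_cons.1 htail).1 _ (mem_map_of_mem ht)).1.le
        _ ≤ c := Finset.min_le (by simp)
        _ < (r ++ [b]).toFinset.min :=
            Finset.coe_lt_min_iff.2 fun a ha => hlow a (mem_toFinset.1 ha)
    · calc t.toFinset.max < b := Finset.max_lt_coe_iff.2 fun x hx =>
            hhigh x (by simpa using mem_flatten.2 ⟨t, ht, mem_toFinset.1 hx⟩)
        _ ≤ (r ++ [b]).toFinset.max := Finset.le_max (by simp)

theorem runBlocks_flatMap_sort {bs : List (Finset α)} (h : StronglyDecreasing bs)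
    (hbs : ∅ ∉ bs) : (bs.flatMap Finset.sort).runBlocks = bs := by
  have hne : ∀ A ∈ bs, A.sort ≠ [] := fun A hA hA' =>
    hbs (by rwa [← Finset.sort_toFinset A (· ≤ ·), hA'] at hA)
  have hruns : (bs.flatMap Finset.sort).ascRuns = bs.map Finset.sort := by
    refine splitBy_flatten (by simpa using hne) ?_ ?_
    · intro r hr
      obtain ⟨A, -, rfl⟩ := mem_map.1 hr
      simpa [sortedLT_iff_isChain] using Finset.sortedLT_sort A
    · refine isChain_map _ |>.2 (h.imp_of_mem fun hA hB hAB => ?_).isChain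
      exact ⟨hne _ hA, hne _ hB, by simpa using Finset.head_sort_le_getLast_sort hAB.2 _ _⟩
  rw [runBlocks, hruns, map_map]
  exact map_congr_left (fun A _ => Finset.sort_toFinset A _) |>.trans (map_id bs)

theorem not_contains21_3_flatMap_sort {bs : List (Finset α)} (h : StronglyDecreasing bs) :
    ¬ (bs.flatMap Finset.sort).Contains21_3 := by
  induction bs with
  | nil => rintro ⟨u, _, _, _, he, -⟩; simp at he
  | cons A bs ih =>
    refine not_contains21_3_append (Finset.sortedLT_sort A) (fun c hc => ?_) (ih h.of_cons)
    obtain ⟨B, hB, hcB⟩ := mem_flatMap.1 hc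
    have hcA : (c : WithBot α) < A.max :=
      (Finset.le_max ((Finset.mem_sort _).1 hcB)).trans_lt ((pairwise_cons.1 h).1 B hB).2
    obtain ⟨y, hy, hcy⟩ := Finset.coe_lt_max_iff.1 hcA
    exact ⟨y, (Finset.mem_sort _).2 hy, hcy⟩

theorem not_contains1_32_flatMap_sort {bs : List (Finset α)} (h : StronglyDecreasing bs) :
    ¬ (bs.flatMap Finset.sort).Contains1_32 := by
  induction bs using reverseRecOn with
  | nil => rintro ⟨u, _, _, _, he, -⟩; simp at he
  | append_singleton bs A ih =>
    rw [StronglyDecreasing, pairwise_append] at h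
    rw [flatMap_append, flatMap_singleton]
    refine not_contains1_32_append (Finset.sortedLT_sort A) (fun a ha => ?_) (ih h.1)
    obtain ⟨B, hB, haB⟩ := mem_flatMap.1 ha
    have hAa : A.min < a :=
      (h.2.2 B hB A (mem_singleton_self A)).1.trans_le (Finset.min_le ((Finset.mem_sort _).1 haB))
    obtain ⟨y, hy, hya⟩ := Finset.min_lt_coe_iff.1 hAa
    exact ⟨y, (Finset.mem_sort _).2 hy, hya⟩

theorem pairwise_disjoint_runBlocks {l : List α} (hl : l.Nodup) :
    l.runBlocks.Pairwise _root_.Disjoint :=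
  pairwise_map.2 <| (nodup_flatten.1 (by rwa [ascRuns, flatten_splitBy])).2.imp
    disjoint_toFinset_iff_disjoint.2

theorem existsUnique_mem_runBlocks {l : List α} (hl : l.Nodup) {a : α} (ha : a ∈ l) :
    ∃! B, B ∈ l.runBlocks ∧ a ∈ B := by
  rw [← flatten_splitBy (fun a b => a < b) l, mem_flatten] at ha
  obtain ⟨r, hr, har⟩ := ha
  refine ⟨r.toFinset, ⟨mem_map_of_mem hr, mem_toFinset.2 har⟩, fun B ⟨hB, haB⟩ => ?_⟩
  by_contra hne
  have hdisj := (pairwise_disjoint_runBlocks hl).forall hB (mem_map_of_mem hr) hne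
  exact Finset.disjoint_left.1 hdisj haB (mem_toFinset.2 har)

theorem empty_notMem_runBlocks (l : List α) : ∅ ∉ l.runBlocks := by
  intro h
  obtain ⟨r, hr, hr'⟩ := mem_map.1 h
  exact ne_nil_of_mem_splitBy hr (toFinset_eq_empty_iff r |>.1 hr')

end List

theorem List.Nodup.exists_perm_ofFn_eq {n : ℕ} {l : List (Fin n)} (hl : l.Nodup)
    (hmem : ∀ v, v ∈ l) : ∃ π : Equiv.Perm (Fin n), List.ofFn π = l := by
  let e := hl.getEquivOfForallMemList l hmem
  have hlen : l.length = n := by simpa using Fintype.card_congr e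
  refine ⟨(finCongr hlen.symm).trans e, List.ext_getElem (by simp [hlen]) fun i _ _ => ?_⟩
  simp [e]

theorem Finset.exists_toFinset_eq_pairwise_of_injOn {β γ : Type*} [DecidableEq β]
    [LinearOrder γ] (s : Finset β) (f : β → γ) (hf : Set.InjOn f s) :
    ∃ l : List β, l.toFinset = s ∧ l.Pairwise fun a b => f b < f a := by
  have hperm := List.mergeSort_perm s.toList fun a b => f b ≤ f a
  refine ⟨_, (List.toFinset_eq_of_perm _ _ hperm).trans (toList_toFinset s), ?_⟩
  have hsorted := List.pairwise_mergeSort (le := fun a b => f b ≤ f a)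
    (fun _ _ _ hab hbc => by simpa using le_trans (by simpa using hbc) (by simpa using hab))
    (fun a b => by simpa using le_total (f b) (f a)) s.toList
  refine ((hperm.nodup_iff.2 (nodup_toList s)).and hsorted).imp_of_mem fun ha hb hab => ?_
  have ha := mem_toList.1 (hperm.mem_iff.1 ha)
  have hb := mem_toList.1 (hperm.mem_iff.1 hb)
  exact lt_of_le_of_ne (by simpa using hab.2) fun h => hab.1 (hf ha hb h.symm)

theorem Finpartition.injOn_min {α : Type*} [LinearOrder α] {s : Finset α} (P : Finpartition s) :
    Set.InjOn Finset.min (P.parts : Set (Finset α)) := by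
  intro A hA B hB h
  obtain ⟨m, hm⟩ := Finset.min_of_nonempty (P.nonempty_of_mem_parts hA)
  exact P.eq_of_mem_parts hA hB (Finset.mem_of_min hm) (Finset.mem_of_min (h ▸ hm))

section Permutations

variable {n : ℕ}

open List

theorem contains132_iff_ofFn (π : Equiv.Perm (Fin n)) :
    contains132 π ↔ (ofFn π).Contains1_32 := by
  simp [contains1_32_iff_getElem, contains132]

theorem contains21_3_iff_ofFn (π : Equiv.Perm (Fin n)) :
    contains21_3 π ↔ (ofFn π).Contains21_3 := by
  simp [contains21_3_iff_getElem, contains21_3]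

noncomputable def runPartition (π : Equiv.Perm (Fin n)) :
    Finpartition (Finset.univ : Finset (Fin n)) :=
  .ofExistsUnique (ofFn π).runBlocks.toFinset (fun _ _ => Finset.subset_univ _)
    (fun a _ => by
      simpa using existsUnique_mem_runBlocks (nodup_ofFn.2 π.injective)
        ((mem_ofFn' π a).2 (π.surjective a)))
    (by simpa using empty_notMem_runBlocks _)

theorem runPartition_parts (π : Equiv.Perm (Fin n)) :
    (runPartition π).parts = (ofFn π).runBlocks.toFinset :=
  rfl

theorem stronglyDecreasing_runBlocks_ofFn {π : Equiv.Perm (Fin n)} (h132 : ¬ contains132 π)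
    (h213 : ¬ contains21_3 π) : StronglyDecreasing (ofFn π).runBlocks :=
  stronglyDecreasing_runBlocks (nodup_ofFn.2 π.injective) (by rwa [← contains132_iff_ofFn])
    (by rwa [← contains21_3_iff_ofFn])

theorem stronglyMonotonePartition_runPartition {π : Equiv.Perm (Fin n)} (h132 : ¬ contains132 π)
    (h213 : ¬ contains21_3 π) : StronglyMonotonePartition (runPartition π) := by
  intro A hA B hB hmin
  rw [runPartition_parts, mem_toFinset] at hA hB
  exact (stronglyDecreasing_runBlocks_ofFn h132 h213).max_lt_max_of_min_lt hA hB hmin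

theorem eq_of_runPartition_eq {π σ : Equiv.Perm (Fin n)}
    (hπ : ¬ contains132 π ∧ ¬ contains21_3 π)
    (hσ : ¬ contains132 σ ∧ ¬ contains21_3 σ)
    (h : runPartition π = runPartition σ) : π = σ := by
  have hblocks := (stronglyDecreasing_runBlocks_ofFn hπ.1 hπ.2).eq_of_toFinset_eq
    (stronglyDecreasing_runBlocks_ofFn hσ.1 hσ.2) (congrArg Finpartition.parts h)
  apply Equiv.coe_fn_injective
  apply ofFn_injective
  rw [← flatMap_sort_runBlocks (ofFn π), hblocks, flatMap_sort_runBlocks]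

theorem StronglyMonotonePartition.exists_stronglyDecreasing
    {P : Finpartition (Finset.univ : Finset (Fin n))} (hP : StronglyMonotonePartition P) :
    ∃ bs, bs.toFinset = P.parts ∧ StronglyDecreasing bs := by
  obtain ⟨bs, hbs, hsorted⟩ := P.parts.exists_toFinset_eq_pairwise_of_injOn _ P.injOn_min
  refine ⟨bs, hbs, hsorted.imp_of_mem fun hA hB hBA => ⟨hBA, hP _ ?_ _ ?_ hBA⟩⟩ <;>
    rwa [← hbs, mem_toFinset]

theorem exists_runPartition_eq {P : Finpartition (Finset.univ : Finset (Fin n))}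
    (hP : StronglyMonotonePartition P) :
    ∃ π : Equiv.Perm (Fin n),
      (¬ contains132 π ∧ ¬ contains21_3 π) ∧ runPartition π = P := by
  obtain ⟨bs, hbs, hdec⟩ := hP.exists_stronglyDecreasing
  have hparts {A} (hA : A ∈ bs) : A ∈ P.parts := hbs ▸ mem_toFinset.2 hA
  have hnd : (bs.flatMap Finset.sort).Nodup := by
    refine nodup_flatMap.2 ⟨fun A _ => Finset.sort_nodup _ _, hdec.nodup.imp_of_mem ?_⟩
    intro A B hA hB hAB
    simpa [Function.onFun, ← disjoint_toFinset_iff_disjoint] using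
      P.disjoint (hparts hA) (hparts hB) hAB
  have hmem (v : Fin n) : v ∈ bs.flatMap Finset.sort := by
    obtain ⟨A, hA, hvA⟩ := P.exists_mem (Finset.mem_univ v)
    exact mem_flatMap.2 ⟨A, by rwa [← hbs, mem_toFinset] at hA, (Finset.mem_sort _).2 hvA⟩
  obtain ⟨π, hπ⟩ := hnd.exists_perm_ofFn_eq hmem
  refine ⟨π, ⟨?_, ?_⟩, Finpartition.ext ?_⟩
  · rw [contains132_iff_ofFn, hπ]
    exact not_contains1_32_flatMap_sort hdec
  · rw [contains21_3_iff_ofFn, hπ]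
    exact not_contains21_3_flatMap_sort hdec
  · rw [runPartition_parts, hπ,
      runBlocks_flatMap_sort hdec fun h => P.empty_notMem_parts (hparts h), hbs]

end Permutations

theorem stmt16 (n : ℕ) :
    Nat.card {π : Equiv.Perm (Fin n) // ¬ contains132 π ∧ ¬ contains21_3 π} =
    Nat.card {P : Finpartition (Finset.univ : Finset (Fin n)) // StronglyMonotonePartition P} := by
  let f (π : {π : Equiv.Perm (Fin n) // ¬ contains132 π ∧ ¬ contains21_3 π}) :
      {P // StronglyMonotonePartition P} :=
    ⟨runPartition π.1, stronglyMonotonePartition_runPartition π.2.1 π.2.2⟩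
  refine Nat.card_eq_of_bijective f ⟨?_, ?_⟩
  · exact fun π σ h => Subtype.ext (eq_of_runPartition_eq π.2 σ.2 (congrArg Subtype.val h))
  · intro P
    obtain ⟨π, hπ, h⟩ := exists_runPartition_eq P.2
    exact ⟨⟨π, hπ⟩, Subtype.ext h⟩
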